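/- Let $(a_n)_{n \geq -1}$ be a real sequence with $a_{-1} = -1$, and define monic polynomials $S_n^{(1)}$ by the symmetric three-term recurrence $S_{n+1}^{(1)}(x) = x S_n^{(1)}(x) - v_n^{(1)} S_{n-1}^{(1)}(x)$ with $v_n^{(1)} = \frac{1}{4}(1 + a_{n-1})(1 - a_{n-2})$, $S_0^{(1)} = 1$, $S_{-1}^{(1)} = 0$. Then for all $n \geq 0$, $S_{n+1}^{(1)}(-1) = \frac{1}{2}(a_{n-1} - 1)\, S_n^{(1)}(-1)$. -/

import Mathlib

/-!
At `x = -1` the recurrence reads `s_{n+1} = -s_n - ¼(1 + c_n)(1 - c_{n-1}) s_{n-1}` with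
`c_n = a_{n-1}`. If `s_n = ½(c_{n-1} - 1) s_{n-1}`, then `¼(1 - c_{n-1}) s_{n-1} = -½ s_n`,
so the recurrence collapses to `s_{n+1} = (-1 + ½(1 + c_n)) s_n = ½(c_n - 1) s_n`.
-/

theorem succ_eq_half_sub_one_mul_of_recurrence {K : Type*} [Field K] [NeZero (2 : K)]
    (s c : ℕ → K)
    (h₀ : s 1 = (c 0 - 1) / 2 * s 0)
    (hrec : ∀ n, s (n + 2) = -s (n + 1) - (1 + c (n + 1)) * (1 - c n) / 4 * s n) :
    ∀ n, s (n + 1) = (c n - 1) / 2 * s n := by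
  intro n
  induction n with
  | zero => exact h₀
  | succ n ih =>
    rw [hrec n, ih, show (4 : K) = 2 * 2 by norm_num]
    field_simp
    ring

/-- For the symmetric recurrence `S_{n+1} = x S_n - v_n S_{n-1}` with
`v_n = ¼(1 + a_{n-1})(1 - a_{n-2})`, `a_{-1} = -1`, `S_0 = 1`, `S_1 = x`
(coming from `S_{-1} = 0`), one has `S_{n+1}(-1) = ½(a_{n-1} - 1) S_n(-1)`. -/
theorem stmt_9 (a : ℤ → ℝ) (ha : a (-1) = -1) (S : ℕ → Polynomial ℝ)
    (hS0 : S 0 = 1) (hS1 : S 1 = Polynomial.X)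
    (hrec : ∀ n : ℕ, 1 ≤ n → S (n + 1) = Polynomial.X * S n -
      Polynomial.C ((1 + a ((n : ℤ) - 1)) * (1 - a ((n : ℤ) - 2)) / 4) * S (n - 1)) :
    ∀ n : ℕ, (S (n + 1)).eval (-1) = (a ((n : ℤ) - 1) - 1) / 2 * (S n).eval (-1) := by
  refine succ_eq_half_sub_one_mul_of_recurrence (fun n ↦ (S n).eval (-1))
    (fun n ↦ a ((n : ℤ) - 1)) ?_ fun n ↦ ?_
  · norm_num [hS0, hS1, ha]
  · have hn : ((n + 1 : ℕ) : ℤ) - 2 = (n : ℤ) - 1 := by push_cast; ring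
    simp only [hrec (n + 1) (Nat.le_add_left 1 n), hn, Polynomial.eval_sub, Polynomial.eval_mul,
      Polynomial.eval_X, Polynomial.eval_C, Nat.add_sub_cancel]
    ring
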